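/- arXiv:2202.13676 — 5 statements merged into one kernel-verified Lean document; each statement's English description precedes it below -/
import Mathlib

section
/- Let X be a non-wasteful allocation and R = (R_1,...,R_k) a partition of the agents with representatives r_ℓ = argmin_{j∈R_ℓ} v_j(X_j), sorted so that v_{r_1}(X_{r_1}) ≤ ... ≤ v_{r_k}(X_{r_k}). Suppose (1) for every ℓ, every i ∈ R_ℓ and every g ∈ X_i, v_i(X_i \ {g}) ≤ v_{r_ℓ}(X_{r_ℓ}) (envy-compatibility), and (2) for all i ∈ R_ℓ and j ∈ R_m with ℓ < m, v_{r_ℓ}(X_{r_ℓ}) ≥ v_i(X_j). Then X is EFX. -/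
/-!
If agent `a` lies in an earlier group than `b`, the no-edge condition bounds `v_a(X_b)` by the
value of `a`'s representative, which is at most `v_a(X_a)`. Otherwise, since valuations are
restricted and `X` is non-wasteful, `a` values the goods of `X_b` at most as much as `b` does,
so envy-compatibility of `b`'s group and the sorting of the representatives give
`v_a(X_b \ {g}) ≤ v_b(X_b \ {g}) ≤ v_{r_m}(X_{r_m}) ≤ v_{r_ℓ}(X_{r_ℓ}) ≤ v_a(X_a)`.
-/

open Finset

section Restricted

variable {G : Type} {w f : G → ℝ}

lemma nonneg_of_restricted (hw : ∀ x, 0 < w x) (hf : ∀ x, f x = 0 ∨ f x = w x) (x : G) :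
    0 ≤ f x := by
  rcases hf x with h | h <;> rw [h]
  exact (hw x).le

lemma le_of_restricted (hw : ∀ x, 0 < w x) (hf : ∀ x, f x = 0 ∨ f x = w x) (x : G) :
    f x ≤ w x := by
  rcases hf x with h | h <;> rw [h]
  exact (hw x).le

variable [DecidableEq G] {s : Finset G} {c : ℝ}

lemma sum_erase_le_of_sum_le_of_restricted (hw : ∀ x, 0 < w x)
    (hf : ∀ x, f x = 0 ∨ f x = w x) (hs : ∑ y ∈ s, f y ≤ c) (x : G) :
    ∑ y ∈ s.erase x, f y ≤ c :=
  (sum_le_sum_of_subset_of_nonneg (erase_subset x s)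
    fun y _ _ => nonneg_of_restricted hw hf y).trans hs

lemma sum_erase_le_of_owner_le_of_restricted {g : G → ℝ} (hw : ∀ x, 0 < w x)
    (hf : ∀ x, f x = 0 ∨ f x = w x) (hg : ∀ x ∈ s, g x = w x) (x : G)
    (hs : ∑ y ∈ s.erase x, g y ≤ c) :
    ∑ y ∈ s.erase x, f y ≤ c := by
  refine (sum_le_sum fun y hy => ?_).trans hs
  rw [hg y (mem_of_mem_erase hy)]
  exact le_of_restricted hw hf y

end Restricted

theorem stmt_2_general (A G : Type) [DecidableEq G]
    (v : A → G → ℝ) (w : G → ℝ) (hw : ∀ x, 0 < w x)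
    (hres : ∀ a x, v a x = 0 ∨ v a x = w x)
    (X : A → Finset G)
    (k : ℕ) (R : Fin k → Finset A)
    (hcover : ∀ a : A, ∃ ℓ, a ∈ R ℓ)
    (r : Fin k → A)
    (hrmin : ∀ ℓ, ∀ a ∈ R ℓ, ∑ x ∈ X (r ℓ), v (r ℓ) x ≤ ∑ x ∈ X a, v a x)
    (hsorted : ∀ ℓ m : Fin k, ℓ ≤ m →
      ∑ x ∈ X (r ℓ), v (r ℓ) x ≤ ∑ x ∈ X (r m), v (r m) x)
    (hnonwaste : ∀ a, ∀ x ∈ X a, v a x = w x)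
    -- (1) envy-compatibility
    (hcompat : ∀ ℓ, ∀ a ∈ R ℓ, ∀ x ∈ X a,
      ∑ y ∈ (X a).erase x, v a y ≤ ∑ y ∈ X (r ℓ), v (r ℓ) y)
    -- (2) no regular edge from an earlier group to a later group
    (hnoedge : ∀ ℓ m : Fin k, ℓ < m → ∀ a ∈ R ℓ, ∀ b ∈ R m,
      ∑ x ∈ X b, v a x ≤ ∑ x ∈ X (r ℓ), v (r ℓ) x) :
    -- X is EFX
    ∀ a b : A, a ≠ b → ∀ x ∈ X b,
      ∑ y ∈ (X b).erase x, v a y ≤ ∑ y ∈ X a, v a y := by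
  intro a b _ x hx
  obtain ⟨ℓ, haℓ⟩ := hcover a
  obtain ⟨m, hbm⟩ := hcover b
  rcases lt_or_ge ℓ m with hlt | hle
  · exact sum_erase_le_of_sum_le_of_restricted hw (hres a)
      ((hnoedge ℓ m hlt a haℓ b hbm).trans (hrmin ℓ a haℓ)) x
  · exact sum_erase_le_of_owner_le_of_restricted hw (hres a) (hnonwaste b) x
      ((hcompat m b hbm x hx).trans ((hsorted m ℓ hle).trans (hrmin ℓ a haℓ)))

/-- If `X` is non-wasteful and `(X, R)` is an envy-compatible
configuration (with representatives sorted by value) in which there is no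
regular edge from an earlier group to a later group, then `X` is EFX. -/
theorem stmt_2 (A G : Type) [DecidableEq A] [DecidableEq G]
    (v : A → G → ℝ) (w : G → ℝ) (hw : ∀ x, 0 < w x)
    (hres : ∀ a x, v a x = 0 ∨ v a x = w x)
    (X : A → Finset G)
    (k : ℕ) (R : Fin k → Finset A)
    (hne : ∀ ℓ, (R ℓ).Nonempty)
    (hdisj : Pairwise fun ℓ m => Disjoint (R ℓ) (R m))
    (hcover : ∀ a : A, ∃ ℓ, a ∈ R ℓ)
    (r : Fin k → A) (hrmem : ∀ ℓ, r ℓ ∈ R ℓ)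
    (hrmin : ∀ ℓ, ∀ a ∈ R ℓ, ∑ x ∈ X (r ℓ), v (r ℓ) x ≤ ∑ x ∈ X a, v a x)
    (hsorted : ∀ ℓ m : Fin k, ℓ ≤ m →
      ∑ x ∈ X (r ℓ), v (r ℓ) x ≤ ∑ x ∈ X (r m), v (r m) x)
    (hnonwaste : ∀ a, ∀ x ∈ X a, v a x = w x)
    -- (1) envy-compatibility
    (hcompat : ∀ ℓ, ∀ a ∈ R ℓ, ∀ x ∈ X a,
      ∑ y ∈ (X a).erase x, v a y ≤ ∑ y ∈ X (r ℓ), v (r ℓ) y)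
    -- (2) no regular edge from an earlier group to a later group
    (hnoedge : ∀ ℓ m : Fin k, ℓ < m → ∀ a ∈ R ℓ, ∀ b ∈ R m,
      ∑ x ∈ X b, v a x ≤ ∑ x ∈ X (r ℓ), v (r ℓ) x) :
    -- X is EFX
    ∀ a b : A, a ≠ b → ∀ x ∈ X b,
      ∑ y ∈ (X b).erase x, v a y ≤ ∑ y ∈ X a, v a y :=
  stmt_2_general A G v w hw hres X k R hcover r hrmin hsorted hnonwaste hcompat hnoedge
end

section
/- In the two-agent instance with goods {g, g_1,...,g_k, g'_1,...,g'_k}, where v_1(g) = v_2(g) = (1/c+1)^k, v_1(g_i) = v_2(g'_i) = (1/c+1)^{i-1}, and v_1(g'_i) = v_2(g_i) = 0 for all i ∈ [k], no allocation is simultaneously Pareto efficient and c-EFkX, for any 0 < c ≤ 1 and integer k ≥ 1. -/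
/-!
Write `t = 1/c + 1`. Each good `e i` (resp. `e' i`) has positive value only for agent 0
(resp. 1), so Pareto efficiency forces it into that agent's bundle. The common good `g` then
goes to some agent `a`, and the other agent `b` holds exactly its own goods, worth
`∑_{i<k} t^i = c (t^k - 1)`. Removing `a`'s `k` other goods from `a`'s bundle leaves `g`,
which `b` values at `t^k`, and `c · t^k > c (t^k - 1)`, so `c`-EFkX fails for `b`.
-/

open Finset

namespace FairDivision

variable {ι G : Type*} [DecidableEq G]

def IsAllocation (X : ι → Finset G) : Prop := ∀ x, ∃! a, x ∈ X a

theorem isAllocation_fin_two_iff [Fintype G] {X : Fin 2 → Finset G} :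
    IsAllocation X ↔ Disjoint (X 0) (X 1) ∧ X 0 ∪ X 1 = univ := by
  simp only [IsAllocation, ExistsUnique, Fin.exists_fin_two, Fin.forall_fin_two,
    disjoint_left, eq_univ_iff_forall, mem_union]
  grind

variable [DecidableEq ι]

def reassign (X : ι → Finset G) (a : ι) (x : G) (b : ι) : Finset G :=
  if b = a then insert x (X b) else (X b).erase x

@[simp]
theorem reassign_self (X : ι → Finset G) (a : ι) (x : G) :
    reassign X a x a = insert x (X a) :=
  if_pos rfl

theorem reassign_of_ne (X : ι → Finset G) {a b : ι} (x : G) (hb : b ≠ a) :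
    reassign X a x b = (X b).erase x :=
  if_neg hb

theorem mem_reassign {X : ι → Finset G} {a b : ι} {x y : G} :
    y ∈ reassign X a x b ↔ (y = x ∧ b = a) ∨ (y ≠ x ∧ y ∈ X b) := by
  by_cases hb : b = a
  · subst hb
    simp only [reassign_self, mem_insert, and_true]
    tauto
  · simp [reassign_of_ne X x hb, hb]

theorem IsAllocation.reassign {X : ι → Finset G} (hX : IsAllocation X) (a : ι) (x : G) :
    IsAllocation (reassign X a x) := by
  intro y
  by_cases hy : y = x
  · exact ⟨a, by simp [hy], fun b hb => by simpa [mem_reassign, hy] using hb⟩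
  · simpa [mem_reassign, hy] using hX y

def ParetoDominates (v : ι → G → ℝ) (Y X : ι → Finset G) : Prop :=
  (∀ a, ∑ x ∈ X a, v a x ≤ ∑ x ∈ Y a, v a x) ∧ ∃ a, ∑ x ∈ X a, v a x < ∑ x ∈ Y a, v a x

def IsParetoEfficient (v : ι → G → ℝ) (X : ι → Finset G) : Prop :=
  ¬ ∃ Y, IsAllocation Y ∧ ParetoDominates v Y X

theorem mem_of_isParetoEfficient {v : ι → G → ℝ} {X : ι → Finset G} (hX : IsAllocation X)
    (hPE : IsParetoEfficient v X) {a : ι} {x : G} (hpos : 0 < v a x)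
    (hzero : ∀ b, b ≠ a → v b x = 0) : x ∈ X a := by
  by_contra hx
  have hgain : ∑ y ∈ X a, v a y < ∑ y ∈ reassign X a x a, v a y := by
    rw [reassign_self, sum_insert hx]
    linarith
  refine hPE ⟨reassign X a x, hX.reassign a x, fun b => ?_, a, hgain⟩
  by_cases hb : b = a
  · subst hb
    exact hgain.le
  · rw [reassign_of_ne X x hb, sum_erase _ (hzero b hb)]

def IsEFkX (c : ℝ) (k : ℕ) (v : ι → G → ℝ) (X : ι → Finset G) : Prop :=
  ∀ i j, i ≠ j → ∀ T ⊆ X j, T.card = min k (X j).card →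
    c * ∑ x ∈ (X j) \ T, v i x ≤ ∑ x ∈ X i, v i x

theorem geom_sum_one_div_add_one {c : ℝ} (hc : c ≠ 0) (k : ℕ) :
    ∑ i ∈ range k, (1 / c + 1) ^ i = c * ((1 / c + 1) ^ k - 1) := by
  rw [geom_sum_eq (by simpa using hc), add_sub_cancel_right]
  field_simp

theorem not_isParetoEfficient_and_isEFkX [Fintype G] [Nontrivial ι] {k : ℕ} {c : ℝ} (hc : 0 < c)
    (v : ι → G → ℝ) (g : G) (w : ι → Fin k → G) (hw : ∀ a, Function.Injective (w a))
    (hgw : ∀ a i, g ≠ w a i) (hcover : ∀ x, x = g ∨ ∃ a i, x = w a i)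
    (hvg : ∀ a, v a g = (1 / c + 1) ^ k)
    (hvw : ∀ a b i, v a (w b i) = if a = b then (1 / c + 1) ^ (i : ℕ) else 0)
    {X : ι → Finset G} (hX : IsAllocation X) :
    ¬ (IsParetoEfficient v X ∧ IsEFkX c k v X) := by
  rintro ⟨hPE, hEF⟩
  have hpow : ∀ n : ℕ, 0 < (1 / c + 1) ^ n := fun n => by positivity
  have hv_nonneg : ∀ b x, 0 ≤ v b x := by
    intro b x
    rcases hcover x with rfl | ⟨a, i, rfl⟩
    · exact (hvg b).symm ▸ (hpow k).le
    · rw [hvw]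
      split_ifs
      exacts [(hpow i).le, le_rfl]
  have hw_mem : ∀ a i, w a i ∈ X a := fun a i =>
    mem_of_isParetoEfficient hX hPE (by simpa [hvw] using hpow i)
      fun b hb => by simp [hvw, hb]
  obtain ⟨a, hga, -⟩ := hX g
  obtain ⟨b, hba⟩ := exists_ne a
  set T := univ.image (w a)
  have hTX : T ⊆ X a := image_subset_iff.mpr fun i _ => hw_mem a i
  have hTk : T.card = k := by rw [card_image_of_injective _ (hw a), card_univ, Fintype.card_fin]
  have hTcard : T.card = min k (X a).card :=
    hTk.trans (min_eq_left (hTk ▸ card_le_card hTX)).symm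
  have hgT : g ∈ X a \ T := mem_sdiff.mpr ⟨hga, by simpa [T] using fun i => (hgw a i).symm⟩
  have hXb : X b ⊆ univ.image (w b) := by
    intro x hx
    rcases hcover x with rfl | ⟨a', i, rfl⟩
    · exact absurd ((hX x).unique hx hga) hba
    · obtain rfl : b = a' := (hX _).unique hx (hw_mem a' i)
      exact mem_image_of_mem _ (mem_univ i)
  have hbound : c * (1 / c + 1) ^ k ≤ c * ((1 / c + 1) ^ k - 1) := calc
    c * (1 / c + 1) ^ k = c * v b g := by rw [hvg]
    _ ≤ c * ∑ x ∈ X a \ T, v b x :=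
        mul_le_mul_of_nonneg_left (single_le_sum (fun x _ => hv_nonneg b x) hgT) hc.le
    _ ≤ ∑ x ∈ X b, v b x := hEF b a hba T hTX hTcard
    _ ≤ ∑ x ∈ univ.image (w b), v b x :=
        sum_le_sum_of_subset_of_nonneg hXb fun x _ _ => hv_nonneg b x
    _ = ∑ i ∈ range k, (1 / c + 1) ^ i := by
        rw [sum_image fun i _ j _ h => hw b h, ← Fin.sum_univ_eq_sum_range]
        simp [hvw]
    _ = c * ((1 / c + 1) ^ k - 1) := geom_sum_one_div_add_one hc.ne' k
  linarith

end FairDivision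

theorem stmt_4_general (k : ℕ) (c : ℝ) (hc0 : 0 < c)
    (G : Type) [Fintype G] [DecidableEq G]
    (eg : G) (e e' : Fin k → G)
    (hinj : Function.Injective e) (hinj' : Function.Injective e')
    (hge : ∀ i, eg ≠ e i) (hge' : ∀ i, eg ≠ e' i)
    (hcover : ∀ x : G, x = eg ∨ (∃ i, x = e i) ∨ (∃ i, x = e' i))
    (v : Fin 2 → G → ℝ)
    (hv0g : v 0 eg = (1/c + 1)^k) (hv1g : v 1 eg = (1/c + 1)^k)
    (hv0e : ∀ i : Fin k, v 0 (e i) = (1/c + 1)^(i : ℕ))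
    (hv1e' : ∀ i : Fin k, v 1 (e' i) = (1/c + 1)^(i : ℕ))
    (hv0e' : ∀ i : Fin k, v 0 (e' i) = 0)
    (hv1e : ∀ i : Fin k, v 1 (e i) = 0)
    (X : Fin 2 → Finset G)
    (hdisjX : Disjoint (X 0) (X 1)) (hcomplete : X 0 ∪ X 1 = Finset.univ) :
    ¬ ((¬ ∃ Y : Fin 2 → Finset G,
          (Disjoint (Y 0) (Y 1) ∧ Y 0 ∪ Y 1 = Finset.univ) ∧
          (∀ a, ∑ x ∈ X a, v a x ≤ ∑ x ∈ Y a, v a x) ∧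
          (∃ a, ∑ x ∈ X a, v a x < ∑ x ∈ Y a, v a x)) ∧
       (∀ i j : Fin 2, i ≠ j → ∀ T ⊆ X j, T.card = min k (X j).card →
          c * ∑ x ∈ (X j) \ T, v i x ≤ ∑ x ∈ X i, v i x)) := by
  rintro ⟨hPE, hEF⟩
  refine FairDivision.not_isParetoEfficient_and_isEFkX hc0 v eg ![e, e'] ?_ ?_ ?_ ?_ ?_
    (FairDivision.isAllocation_fin_two_iff.mpr ⟨hdisjX, hcomplete⟩)
    ⟨fun ⟨Y, hY, hdom⟩ => hPE ⟨Y, FairDivision.isAllocation_fin_two_iff.mp hY, hdom⟩, hEF⟩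
  · simp [Fin.forall_fin_two, hinj, hinj']
  · simp [Fin.forall_fin_two, hge, hge']
  · simpa [Fin.exists_fin_two] using hcover
  · simp [Fin.forall_fin_two, hv0g, hv1g]
  · simp [Fin.forall_fin_two, hv0e, hv1e', hv0e', hv1e]

/-- In the two-agent instance with goods
`{g, g_1, …, g_k, g'_1, …, g'_k}` and values
`v_1(g) = v_2(g) = (1/c+1)^k`, `v_1(g_{i+1}) = v_2(g'_{i+1}) = (1/c+1)^i`,
`v_1(g'_i) = v_2(g_i) = 0`, no allocation is both Pareto efficient and
`c`-EFkX, for any `0 < c ≤ 1` and `k ≥ 1`. -/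
theorem stmt_4 (k : ℕ) (hk : 1 ≤ k) (c : ℝ) (hc0 : 0 < c) (hc1 : c ≤ 1)
    (G : Type) [Fintype G] [DecidableEq G]
    (eg : G) (e e' : Fin k → G)
    (hinj : Function.Injective e) (hinj' : Function.Injective e')
    (hee' : ∀ i j, e i ≠ e' j) (hge : ∀ i, eg ≠ e i) (hge' : ∀ i, eg ≠ e' i)
    (hcover : ∀ x : G, x = eg ∨ (∃ i, x = e i) ∨ (∃ i, x = e' i))
    (v : Fin 2 → G → ℝ)
    (hv0g : v 0 eg = (1/c + 1)^k) (hv1g : v 1 eg = (1/c + 1)^k)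
    (hv0e : ∀ i : Fin k, v 0 (e i) = (1/c + 1)^(i : ℕ))
    (hv1e' : ∀ i : Fin k, v 1 (e' i) = (1/c + 1)^(i : ℕ))
    (hv0e' : ∀ i : Fin k, v 0 (e' i) = 0)
    (hv1e : ∀ i : Fin k, v 1 (e i) = 0)
    (X : Fin 2 → Finset G)
    (hdisjX : Disjoint (X 0) (X 1)) (hcomplete : X 0 ∪ X 1 = Finset.univ) :
    ¬ ((¬ ∃ Y : Fin 2 → Finset G,
          (Disjoint (Y 0) (Y 1) ∧ Y 0 ∪ Y 1 = Finset.univ) ∧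
          (∀ a, ∑ x ∈ X a, v a x ≤ ∑ x ∈ Y a, v a x) ∧
          (∃ a, ∑ x ∈ X a, v a x < ∑ x ∈ Y a, v a x)) ∧
       (∀ i j : Fin 2, i ≠ j → ∀ T ⊆ X j, T.card = min k (X j).card →
          c * ∑ x ∈ (X j) \ T, v i x ≤ ∑ x ∈ X i, v i x)) :=
  stmt_4_general k c hc0 G eg e e' hinj hinj' hge hge' hcover v hv0g hv1g hv0e hv1e' hv0e' hv1e X
    hdisjX hcomplete
end

section
/- The greedy algorithm that processes goods in non-increasing order of v(g) and allocates each good g to an agent i minimizing v_i(X_i) among agents with v_i(g) = v(g) maintains the following invariant, hence its output is EFX+: after each allocation step, for all agents i, j and every good h ∈ X_j with v_i(h) = v(h) > 0, v_i(X_i) ≥ v_i(X_j \ {h}). -/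
/-!
Only the bundle of the receiver `i` changes. An agent `a ≠ i` who wants `g` was a candidate
for it, so minimality of `v_i(X_i)` bounds `v_a(X_i)` (which is at most `v_i(X_i)`, since every
good of `X_i` has full value for `i`) by `v_a(X_a)`. Removing some other good `h` instead gives
`v_a(X_i + g - h) ≤ w g + v_i(X_i) - w h ≤ v_i(X_i) ≤ v_a(X_a)`, as goods arrive in non-increasing
order of `w`. If `a` does not value `g`, the old invariant applies verbatim.
-/

open Finset

lemma Finset.sum_insert_le_add_of_nonneg {ι M : Type*} [DecidableEq ι] [AddCommMonoid M]
    [PartialOrder M] [IsOrderedAddMonoid M] {f : ι → M} {a : ι} (hfa : 0 ≤ f a) (s : Finset ι) :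
    ∑ x ∈ insert a s, f x ≤ f a + ∑ x ∈ s, f x := by
  by_cases ha : a ∈ s
  · rw [insert_eq_of_mem ha]
    exact le_add_of_nonneg_left hfa
  · rw [sum_insert ha]

section RestrictedAdditive

variable {A G : Type*} {v : A → G → ℝ} {w : G → ℝ}

lemma valuation_nonneg_of_restricted (hw : ∀ g, 0 ≤ w g)
    (hres : ∀ a g, v a g = 0 ∨ v a g = w g) (a : A) (g : G) : 0 ≤ v a g := by
  rcases hres a g with h | h <;> rw [h]
  exact hw g

lemma valuation_le_of_restricted (hw : ∀ g, 0 ≤ w g)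
    (hres : ∀ a g, v a g = 0 ∨ v a g = w g) (a : A) (g : G) : v a g ≤ w g := by
  rcases hres a g with h | h <;> rw [h]
  exact hw g

lemma sum_le_sum_of_full_value (hw : ∀ g, 0 ≤ w g)
    (hres : ∀ a g, v a g = 0 ∨ v a g = w g) {S : Finset G} {b : A}
    (hS : ∀ x ∈ S, v b x = w x) (a : A) : ∑ x ∈ S, v a x ≤ ∑ x ∈ S, v b x :=
  sum_le_sum fun x hx => (hS x hx).symm ▸ valuation_le_of_restricted hw hres a x

variable [DecidableEq G]

lemma sum_erase_insert_self_le (hw : ∀ g, 0 ≤ w g)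
    (hres : ∀ a g, v a g = 0 ∨ v a g = w g) {S T : Finset G} {a i : A} {g : G}
    (hS : ∀ x ∈ S, v i x = w x) (hmin : ∑ x ∈ S, v i x ≤ ∑ x ∈ T, v a x) :
    ∑ x ∈ (insert g S).erase g, v a x ≤ ∑ x ∈ T, v a x :=
  calc ∑ x ∈ (insert g S).erase g, v a x
      _ ≤ ∑ x ∈ S, v a x := sum_le_sum_of_subset_of_nonneg (erase_insert_subset g S)
            fun x _ _ => valuation_nonneg_of_restricted hw hres a x
      _ ≤ ∑ x ∈ S, v i x := sum_le_sum_of_full_value hw hres hS a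
      _ ≤ ∑ x ∈ T, v a x := hmin

lemma sum_erase_insert_le_of_ne (hw : ∀ g, 0 ≤ w g)
    (hres : ∀ a g, v a g = 0 ∨ v a g = w g) {S T : Finset G} {a i : A} {g h : G}
    (hS : ∀ x ∈ S, v i x = w x) (hh : h ∈ S) (hgh : h ≠ g) (hsorted : w g ≤ w h)
    (hinv : ∑ x ∈ S.erase h, v a x ≤ ∑ x ∈ T, v a x)
    (hmin : v a g = w g → ∑ x ∈ S, v i x ≤ ∑ x ∈ T, v a x) :
    ∑ x ∈ (insert g S).erase h, v a x ≤ ∑ x ∈ T, v a x := by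
  rw [erase_insert_of_ne hgh.symm]
  refine (sum_insert_le_add_of_nonneg (valuation_nonneg_of_restricted hw hres a g) _).trans ?_
  rcases hres a g with hag | hag
  · simpa [hag] using hinv
  · calc v a g + ∑ x ∈ S.erase h, v a x
        _ ≤ w h + ∑ x ∈ S.erase h, v i x := add_le_add (hag ▸ hsorted)
            (sum_le_sum_of_full_value hw hres (fun x hx => hS x (mem_of_mem_erase hx)) a)
        _ = ∑ x ∈ S, v i x := by rw [← hS h hh, add_sum_erase S _ hh]
        _ ≤ ∑ x ∈ T, v a x := hmin hag

end RestrictedAdditive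

theorem stmt_7_general (A G : Type) [DecidableEq A] [DecidableEq G]
    (v : A → G → ℝ) (w : G → ℝ) (hw : ∀ g, 0 ≤ w g)
    (hres : ∀ a g, v a g = 0 ∨ v a g = w g)
    (X : A → Finset G)
    (hnonwaste : ∀ a, ∀ h ∈ X a, v a h = w h)
    (hinv : ∀ i j : A, ∀ h ∈ X j, v i h = w h → 0 < w h →
      ∑ x ∈ (X j).erase h, v i x ≤ ∑ x ∈ X i, v i x)
    (g : G)
    (hsorted : ∀ a, ∀ h ∈ X a, w g ≤ w h)
    (i : A)
    (hmin : ∀ a : A, v a g = w g → ∑ x ∈ X i, v i x ≤ ∑ x ∈ X a, v a x) :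
    ∀ a b : A, ∀ h ∈ Function.update X i (insert g (X i)) b,
      v a h = w h → 0 < w h →
      ∑ x ∈ (Function.update X i (insert g (X i)) b).erase h, v a x ≤
        ∑ x ∈ Function.update X i (insert g (X i)) a, v a x := by
  have hnn := valuation_nonneg_of_restricted hw hres
  intro a b h hmem hah hwh
  rcases eq_or_ne b i with rfl | hb <;> rcases eq_or_ne a b with rfl | ha
  · simp only [Function.update_self]
    exact sum_le_sum_of_subset_of_nonneg (erase_subset _ _) fun x _ _ => hnn a x
  · simp only [Function.update_self, Function.update_of_ne ha] at hmem ⊢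
    rcases eq_or_ne h g with rfl | hgh
    · exact sum_erase_insert_self_le hw hres (hnonwaste b) (hmin a hah)
    · have hh := (mem_insert.mp hmem).resolve_left hgh
      exact sum_erase_insert_le_of_ne hw hres (hnonwaste b) hh hgh (hsorted b h hh)
        (hinv a b h hh hah hwh) (hmin a)
  · simp only [Function.update_of_ne hb] at hmem ⊢
    exact hinv a a h hmem hah hwh
  · rw [Function.update_of_ne hb] at hmem ⊢
    rcases eq_or_ne a i with rfl | hai
    · rw [Function.update_self]
      exact (hinv a b h hmem hah hwh).trans <|
        sum_le_sum_of_subset_of_nonneg (subset_insert g _) fun x _ _ => hnn a x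
    · rw [Function.update_of_ne hai]
      exact hinv a b h hmem hah hwh

/-- one step of the greedy algorithm maintains the EFX⁺
invariant.  If the current (non-wasteful) allocation `X` satisfies
"for all agents `i, j` and every `h ∈ X j` with `v i h = w h > 0`,
`v_i(X_i) ≥ v_i(X_j \ {h})`", the next good `g` satisfies `w g ≤ w h` for all
already allocated `h`, and `g` is given to an agent `i` with `v i g = w g`
minimizing `v_i(X_i)` among such agents, then the invariant still holds. -/
theorem stmt_7 (A G : Type) [DecidableEq A] [DecidableEq G]
    (v : A → G → ℝ) (w : G → ℝ) (hw : ∀ g, 0 ≤ w g)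
    (hres : ∀ a g, v a g = 0 ∨ v a g = w g)
    (X : A → Finset G)
    (hnonwaste : ∀ a, ∀ h ∈ X a, v a h = w h)
    (hinv : ∀ i j : A, ∀ h ∈ X j, v i h = w h → 0 < w h →
      ∑ x ∈ (X j).erase h, v i x ≤ ∑ x ∈ X i, v i x)
    (g : G) (hgnew : ∀ a, g ∉ X a)
    (hsorted : ∀ a, ∀ h ∈ X a, w g ≤ w h)
    (i : A) (hig : v i g = w g)
    (hmin : ∀ a : A, v a g = w g → ∑ x ∈ X i, v i x ≤ ∑ x ∈ X a, v a x) :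
    ∀ a b : A, ∀ h ∈ Function.update X i (insert g (X i)) b,
      v a h = w h → 0 < w h →
      ∑ x ∈ (Function.update X i (insert g (X i)) b).erase h, v a x ≤
        ∑ x ∈ Function.update X i (insert g (X i)) a, v a x :=
  stmt_7_general A G v w hw hres X hnonwaste hinv g hsorted i hmin
end

section
/- Suppose during the remaining-goods allocation phase the partial allocation X is EFX, agent j receives exactly one new good g (so X'_j = X_j ∪ {g}), and agent i's new bundle X'_i satisfies v_i(X'_i) ≥ v_i(X_i) + v_i(g). Then for any two distinct goods g_1, g_2 ∈ X'_j with g ≠ g_1, v_i(X'_j \ {g_1, g_2}) ≤ v_i(X'_i). -/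
open Finset

/-- additive-valuation computation in the remaining-goods phase.
If agent `a`'s new value satisfies `V' ≥ v_a(X_a) + v_a(g)`, `X'_b = X_b ∪ {g}`
with `g ∉ X_b`, `X` is EFX towards `b`'s bundle, then for all distinct
`g1, g2 ∈ X'_b` with `g ≠ g1`, `v_a(X'_b \ {g1, g2}) ≤ V'`. -/
theorem stmt_9 (G : Type) [DecidableEq G]
    (u : G → ℝ) (hu : ∀ x, 0 ≤ u x)
    (Xa Xb : Finset G) (g : G) (hg : g ∉ Xb)
    (hEFX : ∀ h ∈ Xb, ∑ x ∈ Xb.erase h, u x ≤ ∑ x ∈ Xa, u x)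
    (Va' : ℝ) (hVa' : (∑ x ∈ Xa, u x) + u g ≤ Va')
    (g1 g2 : G) (h12 : g1 ≠ g2)
    (hg1 : g1 ∈ insert g Xb) (hg2 : g2 ∈ insert g Xb) (hgg1 : g ≠ g1) :
    ∑ x ∈ (insert g Xb) \ {g1, g2}, u x ≤ Va' := by
  have hg1b : g1 ∈ Xb := by
    rcases mem_insert.1 hg1 with h | h
    · exact absurd h.symm hgg1
    · exact h
  by_cases hgg2 : g2 = g
  · subst hgg2
    have hset : (insert g2 Xb) \ {g1, g2} = Xb.erase g1 := by
      ext x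
      simp only [mem_sdiff, mem_insert, mem_erase, mem_singleton]
      constructor
      · rintro ⟨hx, hx2⟩
        push_neg at hx2
        exact ⟨hx2.1, hx.resolve_left hx2.2⟩
      · rintro ⟨hx1, hx⟩
        refine ⟨Or.inr hx, ?_⟩
        push_neg
        exact ⟨hx1, fun h => hg (h ▸ hx)⟩
    rw [hset]
    have := hEFX g1 hg1b
    have hug := hu g2
    linarith
  · have hg2b : g2 ∈ Xb := (mem_insert.1 hg2).resolve_left hgg2
    have hset : (insert g Xb) \ {g1, g2} = insert g ((Xb.erase g1).erase g2) := by
      ext x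
      simp only [mem_sdiff, mem_insert, mem_erase, mem_singleton]
      constructor
      · rintro ⟨hx, hx2⟩
        push_neg at hx2
        rcases hx with h | h
        · exact Or.inl h
        · exact Or.inr ⟨hx2.2, hx2.1, h⟩
      · rintro (h | ⟨h2, h1, hx⟩)
        · refine ⟨Or.inl h, ?_⟩
          push_neg
          exact ⟨fun he => hgg1 (h.symm ▸ he ▸ rfl), fun he => hgg2 ((he ▸ h).symm ▸ rfl)⟩
        · exact ⟨Or.inr hx, by push_neg; exact ⟨h1, h2⟩⟩
    rw [hset, sum_insert (by simp [hg])]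
    have hsub : ∑ x ∈ (Xb.erase g1).erase g2, u x ≤ ∑ x ∈ Xb.erase g1, u x :=
      sum_le_sum_of_subset_of_nonneg (erase_subset _ _) (fun i _ _ => hu i)
    have := hEFX g1 hg1b
    linarith
end

section
/- Let X be an EFX allocation with additive valuations, and suppose a single unallocated good g with g ∉ X_j is added to agent j's bundle, no other bundle changing. If some agent i with v_i(g') ≥ v_i(g) also received a good g' added to X_i, then i does not envy X_j ∪ {g} up to any two goods: for all distinct g_1, g_2 ∈ X_j ∪ {g}, v_i((X_j ∪ {g}) \ {g_1, g_2}) ≤ v_i(X_i ∪ {g'}). -/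
/-!
Since `g1 ≠ g2`, one of the two removed goods, say `h`, lies in `X_j`. What remains of
`X_j ∪ {g}` is then contained in `(X_j \ {h}) ∪ {g}`, whose value is at most
`u g + u(X_j \ {h}) ≤ u g' + u(X_i)` by EFX and `u g ≤ u g'`.
-/

open Finset

theorem Finset.sum_insert_le_add {α β : Type*} [DecidableEq α] [AddCommMonoid β]
    [PartialOrder β] [IsOrderedAddMonoid β] {f : α → β} (hf : ∀ x, 0 ≤ f x) (a : α)
    (s : Finset α) : ∑ x ∈ insert a s, f x ≤ f a + ∑ x ∈ s, f x := by
  by_cases ha : a ∈ s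
  · rw [insert_eq_of_mem ha]
    exact le_add_of_nonneg_left (hf a)
  · rw [sum_insert ha]

theorem sum_insert_sdiff_le_of_efx {G : Type} [DecidableEq G] {u : G → ℝ}
    (hu : ∀ x, 0 ≤ u x) {Xi Xj : Finset G}
    (hEFX : ∀ h ∈ Xj, ∑ x ∈ Xj.erase h, u x ≤ ∑ x ∈ Xi, u x)
    {g g' : G} (hg' : g' ∉ Xi) (hgg' : u g ≤ u g')
    {h : G} (hh : h ∈ Xj) {t : Finset G} (ht : h ∈ t) :
    ∑ x ∈ insert g Xj \ t, u x ≤ ∑ x ∈ insert g' Xi, u x := by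
  have hsub : insert g Xj \ t ⊆ insert g (Xj.erase h) := fun x hx => by grind
  calc ∑ x ∈ insert g Xj \ t, u x
      ≤ ∑ x ∈ insert g (Xj.erase h), u x :=
        sum_le_sum_of_subset_of_nonneg hsub fun x _ _ => hu x
    _ ≤ u g + ∑ x ∈ Xj.erase h, u x := sum_insert_le_add hu g _
    _ ≤ u g' + ∑ x ∈ Xi, u x := add_le_add hgg' (hEFX h hh)
    _ = ∑ x ∈ insert g' Xi, u x := (sum_insert hg').symm

theorem stmt_10_general (G : Type) [DecidableEq G]
    (u : G → ℝ) (hu : ∀ x, 0 ≤ u x)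
    (Xi Xj : Finset G)
    (hEFX : ∀ h ∈ Xj, ∑ x ∈ Xj.erase h, u x ≤ ∑ x ∈ Xi, u x)
    (g : G)
    (g' : G) (hg' : g' ∉ Xi) (hgg' : u g ≤ u g') :
    ∀ g1 g2 : G, g1 ≠ g2 → g1 ∈ insert g Xj → g2 ∈ insert g Xj →
      ∑ x ∈ (insert g Xj) \ {g1, g2}, u x ≤ ∑ x ∈ insert g' Xi, u x := by
  intro g1 g2 h12 h1 h2
  have hmem : g1 ∈ Xj ∨ g2 ∈ Xj := by grind
  rcases hmem with hj | hj
  · exact sum_insert_sdiff_le_of_efx hu hEFX hg' hgg' hj (by simp)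
  · exact sum_insert_sdiff_le_of_efx hu hEFX hg' hgg' hj (by simp)

/-- let `X` be EFX (w.r.t. agent `i`'s additive valuation `u`),
let good `g ∉ X_j` be added to agent `j`'s bundle, and let agent `i` receive a
good `g' ∉ X_i` with `u g' ≥ u g`.  Then `i` does not envy `X_j ∪ {g}` up to
any two goods: for all distinct `g1, g2 ∈ X_j ∪ {g}`,
`u((X_j ∪ {g}) \ {g1, g2}) ≤ u(X_i ∪ {g'})`. -/
theorem stmt_10 (G : Type) [DecidableEq G]
    (u : G → ℝ) (hu : ∀ x, 0 ≤ u x)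
    (Xi Xj : Finset G)
    (hEFX : ∀ h ∈ Xj, ∑ x ∈ Xj.erase h, u x ≤ ∑ x ∈ Xi, u x)
    (g : G) (hg : g ∉ Xj)
    (g' : G) (hg' : g' ∉ Xi) (hgg' : u g ≤ u g') :
    ∀ g1 g2 : G, g1 ≠ g2 → g1 ∈ insert g Xj → g2 ∈ insert g Xj →
      ∑ x ∈ (insert g Xj) \ {g1, g2}, u x ≤ ∑ x ∈ insert g' Xi, u x :=
  stmt_10_general G u hu Xi Xj hEFX g g' hg' hgg'
end
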